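/- arXiv:1501.07694 — 4 statements merged into one kernel-verified Lean document; each statement's English description precedes it below -/
import Mathlib

section
/- If a group G has a cyclic normal subgroup T such that the quotient G/T is metacyclic, then every subgroup of G can be generated by at most 3 elements. -/
/-!
Every subgroup `H` of `G` is an extension of `H ∩ T`, a subgroup of the cyclic group `T`, by the
image of `H` in `G ⧸ T`, a subgroup of a metacyclic group. Generators of a normal subgroup together
with lifts of generators of the quotient generate the group, so the number of generators needed is
additive along such extensions, and the bound `1 + (1 + 1)` follows from the fact that subgroups
of cyclic groups are cyclic.
-/

/-- A group is metacyclic if it has a cyclic normal subgroup with cyclic quotient. -/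
def IsMetacyclic (G : Type*) [Group G] : Prop :=
  ∃ (N : Subgroup G) (_ : N.Normal), IsCyclic N ∧ IsCyclic (G ⧸ N)

namespace Group

def RankLE (G : Type*) [Group G] (n : ℕ) : Prop :=
  ∃ S : Finset G, S.card ≤ n ∧ Subgroup.closure (S : Set G) = ⊤

def SubgroupsRankLE (G : Type*) [Group G] (n : ℕ) : Prop :=
  ∀ H : Subgroup G, RankLE H n

variable {G K Q : Type*} [Group G] [Group K] [Group Q] {m n : ℕ}

theorem RankLE.of_surjective (f : G →* K) (hf : Function.Surjective f) (h : RankLE G n) :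
    RankLE K n := by
  classical
  obtain ⟨S, hcard, hS⟩ := h
  refine ⟨S.image f, Finset.card_image_le.trans hcard, ?_⟩
  rw [Finset.coe_image, ← MonoidHom.map_closure, hS, Subgroup.map_top_of_surjective f hf]

theorem rankLE_one_of_isCyclic [IsCyclic G] : RankLE G 1 := by
  obtain ⟨g, hg⟩ := isCyclic_iff_exists_zpowers_eq_top.mp (inferInstance : IsCyclic G)
  exact ⟨{g}, by simp, by rwa [Finset.coe_singleton, ← Subgroup.zpowers_eq_closure]⟩

theorem RankLE.of_ker_of_range (f : G →* Q) (hker : RankLE f.ker m) (hrange : RankLE f.range n) :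
    RankLE G (m + n) := by
  classical
  obtain ⟨S, hScard, hS⟩ := hker
  obtain ⟨R, hRcard, hR⟩ := hrange
  have hlift := Function.rightInverse_surjInv f.rangeRestrict_surjective
  set A := S.image f.ker.subtype
  set B := R.image (Function.surjInv f.rangeRestrict_surjective)
  refine ⟨A ∪ B, (Finset.card_union_le _ _).trans (add_le_add
    (Finset.card_image_le.trans hScard) (Finset.card_image_le.trans hRcard)), ?_⟩
  set C := Subgroup.closure ((A ∪ B : Finset G) : Set G)
  have hkerC : f.rangeRestrict.ker ≤ C := by
    rw [f.ker_rangeRestrict, ← f.ker.range_subtype, MonoidHom.range_eq_map, ← hS,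
      MonoidHom.map_closure, Subgroup.closure_le, ← Finset.coe_image]
    exact (Finset.coe_subset.mpr Finset.subset_union_left).trans Subgroup.subset_closure
  have hmapC : (⊤ : Subgroup f.range) ≤ C.map f.rangeRestrict := by
    rw [← hR, Subgroup.closure_le, ← hlift.image_image (R : Set f.range), ← Finset.coe_image]
    exact Set.image_mono ((Finset.coe_subset.mpr Finset.subset_union_right).trans
      Subgroup.subset_closure)
  rw [← Subgroup.map_top_of_surjective _ f.rangeRestrict_surjective, Subgroup.map_le_map_iff',
    sup_eq_left.mpr hkerC, top_sup_eq] at hmapC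
  exact top_le_iff.mp hmapC

theorem SubgroupsRankLE.rankLE_of_injective (h : SubgroupsRankLE G n) (f : K →* G)
    (hf : Function.Injective f) : RankLE K n :=
  (h f.range).of_surjective (MonoidHom.ofInjective hf).symm.toMonoidHom
    (MonoidHom.ofInjective hf).symm.surjective

theorem subgroupsRankLE_one_of_isCyclic [IsCyclic G] : SubgroupsRankLE G 1 :=
  fun _ => rankLE_one_of_isCyclic

theorem SubgroupsRankLE.of_ker (f : G →* Q) (hker : SubgroupsRankLE f.ker m)
    (hQ : SubgroupsRankLE Q n) : SubgroupsRankLE G (m + n) := by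
  intro H
  let fH := f.comp H.subtype
  have hker_le (x : fH.ker) : ((x : H) : G) ∈ f.ker := x.2
  exact RankLE.of_ker_of_range fH
    (hker.rankLE_of_injective ((H.subtype.comp fH.ker.subtype).codRestrict f.ker hker_le)
      ((MonoidHom.injective_codRestrict _ _ _).mpr
        (H.subtype_injective.comp fH.ker.subtype_injective)))
    (hQ fH.range)

theorem SubgroupsRankLE.of_quotient (N : Subgroup G) [N.Normal] (hN : SubgroupsRankLE N m)
    (hQ : SubgroupsRankLE (G ⧸ N) n) : SubgroupsRankLE G (m + n) := by
  rw [← QuotientGroup.ker_mk' N] at hN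
  exact hN.of_ker _ hQ

theorem subgroupsRankLE_two_of_isMetacyclic (h : IsMetacyclic G) : SubgroupsRankLE G 2 := by
  obtain ⟨N, _, _, _⟩ := h
  exact .of_quotient N subgroupsRankLE_one_of_isCyclic subgroupsRankLE_one_of_isCyclic

end Group

theorem rank_le_three_of_cyclic_by_metacyclic {G : Type*} [Group G]
    (T : Subgroup G) (hTn : T.Normal) (hTc : IsCyclic T)
    (hQ : IsMetacyclic (G ⧸ T)) (H : Subgroup G) :
    ∃ S : Finset H, S.card ≤ 3 ∧ Subgroup.closure (S : Set H) = ⊤ :=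
  Group.SubgroupsRankLE.of_quotient T Group.subgroupsRankLE_one_of_isCyclic
    (Group.subgroupsRankLE_two_of_isMetacyclic hQ) H
end

section
/- Let G be a group and c ∈ G an element of infinite order. If every element of infinite order in G lies in the cyclic subgroup ⟨c⟩, then G is metacyclic; more precisely, either G = ⟨c⟩ ≅ ℤ, or G ≅ ⟨a, c | a² = 1, a c a⁻¹ = c⁻¹⟩ ≅ ℤ/2 * ℤ/2. -/
open Subgroup

section

variable {G : Type*} [Group G]

theorem isMetacyclic_of_index_dvd_two (N : Subgroup G) [IsCyclic N] (hN : N.index ∣ 2) :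
    IsMetacyclic G := by
  have hNormal : N.Normal := by
    rcases (Nat.dvd_prime Nat.prime_two).mp hN with h | h
    · exact normal_of_index_eq_one h
    · exact normal_of_index_eq_two h
  exact ⟨N, hNormal, inferInstance, isCyclic_of_card_dvd_prime (p := 2) hN⟩

theorem not_isOfFinOrder_mul_of_commute {g c : G} (hgc : Commute g c) (hg : IsOfFinOrder g)
    (hc : ¬IsOfFinOrder c) : ¬IsOfFinOrder (g * c) := fun hgc' =>
  hc <| by
    simpa using ((Commute.refl g).inv_left.mul_right hgc.inv_left).isOfFinOrder_mul hg.inv hgc'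

theorem isOfFinOrder_conj_iff {g c : G} : IsOfFinOrder (g * c * g⁻¹) ↔ IsOfFinOrder c :=
  (MulAut.conj g).injective.isOfFinOrder_iff (f := (MulAut.conj g).toMonoidHom)

theorem eq_one_of_isOfFinOrder_of_mem_zpowers {c x : G} (hc : ¬IsOfFinOrder c)
    (hx : IsOfFinOrder x) (hxc : x ∈ zpowers c) : x = 1 := by
  obtain ⟨k, rfl⟩ := mem_zpowers_iff.mp hxc
  obtain ⟨n, hn, hkn⟩ := isOfFinOrder_iff_zpow_eq_one.mp hx
  rw [← zpow_mul, ← zpow_zero c] at hkn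
  obtain rfl : k = 0 := by
    simpa [hn] using injective_zpow_iff_not_isOfFinOrder.mpr hc hkn
  exact zpow_zero c

theorem conj_eq_self_or_inv_of_mem_zpowers {g c : G} (hc : ¬IsOfFinOrder c)
    (h₁ : g * c * g⁻¹ ∈ zpowers c) (h₂ : g⁻¹ * c * g ∈ zpowers c) :
    g * c * g⁻¹ = c ∨ g * c * g⁻¹ = c⁻¹ := by
  obtain ⟨k, hk⟩ := mem_zpowers_iff.mp h₁
  obtain ⟨l, hl⟩ := mem_zpowers_iff.mp h₂
  have hkl : c ^ (1 : ℤ) = c ^ (k * l) := by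
    calc c ^ (1 : ℤ) = g * (g⁻¹ * c * g) * g⁻¹ := by group
      _ = (g * c * g⁻¹) ^ l := by rw [← hl, conj_zpow]
      _ = c ^ (k * l) := by rw [← hk, zpow_mul]
  have hkl' : k * l = 1 := (injective_zpow_iff_not_isOfFinOrder.mpr hc hkl).symm
  rcases Int.eq_one_or_neg_one_of_mul_eq_one hkl' with rfl | rfl
  · exact .inl (by simpa using hk.symm)
  · exact .inr (by simpa using hk.symm)

section InfiniteOrderInZPowers

variable {c : G}

theorem conj_eq_inv_of_notMem_zpowers (hc : ¬IsOfFinOrder c)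
    (hall : ∀ g : G, ¬IsOfFinOrder g → g ∈ zpowers c)
    {g : G} (hg : g ∉ zpowers c) : g * c * g⁻¹ = c⁻¹ := by
  have hconj (x : G) : x * c * x⁻¹ ∈ zpowers c := hall _ (isOfFinOrder_conj_iff.not.mpr hc)
  refine (conj_eq_self_or_inv_of_mem_zpowers hc (hconj g) (by simpa using hconj g⁻¹)).resolve_left
    fun hfix => ?_
  have hcomm : Commute g c := mul_inv_eq_iff_eq_mul.mp hfix
  have hgc := hall _ (not_isOfFinOrder_mul_of_commute hcomm (not_not.mp (mt (hall g) hg)) hc)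
  exact hg (by simpa using mul_mem hgc (inv_mem (mem_zpowers c)))

theorem mul_mem_zpowers_of_notMem (hc : ¬IsOfFinOrder c)
    (hall : ∀ g : G, ¬IsOfFinOrder g → g ∈ zpowers c)
    {g h : G} (hg : g ∉ zpowers c) (hh : h ∉ zpowers c) :
    g * h ∈ zpowers c := by
  by_contra hgh
  have hinv : c = c⁻¹ := by
    calc c = (g * c * g⁻¹)⁻¹ := by rw [conj_eq_inv_of_notMem_zpowers hc hall hg, inv_inv]
      _ = g * (h * c * h⁻¹) * g⁻¹ := by rw [conj_eq_inv_of_notMem_zpowers hc hall hh]; group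
      _ = (g * h) * c * (g * h)⁻¹ := by group
      _ = c⁻¹ := conj_eq_inv_of_notMem_zpowers hc hall hgh
  exact hc (isOfFinOrder_iff_pow_eq_one.mpr ⟨2, two_pos, by rw [sq]; nth_rw 2 [hinv]; group⟩)

theorem mul_self_eq_one_of_notMem_zpowers (hc : ¬IsOfFinOrder c)
    (hall : ∀ g : G, ¬IsOfFinOrder g → g ∈ zpowers c)
    {a : G} (ha : a ∉ zpowers c) : a * a = 1 :=
  have hfin : IsOfFinOrder a := not_not.mp (mt (hall a) ha)
  eq_one_of_isOfFinOrder_of_mem_zpowers hc ((Commute.refl a).isOfFinOrder_mul hfin hfin)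
    (mul_mem_zpowers_of_notMem hc hall ha ha)

theorem index_zpowers_dvd_two (hc : ¬IsOfFinOrder c)
    (hall : ∀ g : G, ¬IsOfFinOrder g → g ∈ zpowers c) :
    (zpowers c).index ∣ 2 := by
  by_cases htop : zpowers c = ⊤
  · simp [index_eq_one.mpr htop]
  · obtain ⟨a, ha⟩ := SetLike.exists_not_mem_of_ne_top _ htop
    refine (index_eq_two_iff_exists_notMem_and'.mpr ⟨a, ha, fun b => ?_⟩).dvd
    exact or_iff_not_imp_right.mpr (mul_mem_zpowers_of_notMem hc hall ha)

end InfiniteOrderInZPowers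

section InfiniteDihedral

variable {a c : G}

theorem zpow_mul_eq_mul_zpow_neg (hac : a * c * a⁻¹ = c⁻¹) (i : ℤ) :
    c ^ i * a = a * c ^ (-i) := by
  have hconj : a * c ^ (-i) * a⁻¹ = c ^ i := by rw [← conj_zpow, hac, inv_zpow', neg_neg]
  rw [← hconj]; group

local notation "ι" => ZMod.castHom (dvd_refl 0) ℤ

def infiniteDihedralHom (ha : a * a = 1) (hac : a * c * a⁻¹ = c⁻¹) : DihedralGroup 0 →* G where
  toFun
    | .r i => c ^ ι i
    | .sr i => a * c ^ ι i
  map_one' := by rw [DihedralGroup.one_def]; simp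
  map_mul' := by
    rintro (i | i) (j | j) <;> simp only [DihedralGroup.r_mul_r, DihedralGroup.r_mul_sr,
      DihedralGroup.sr_mul_r, DihedralGroup.sr_mul_sr, map_add, map_sub]
    · exact zpow_add c _ _
    · rw [← mul_assoc, zpow_mul_eq_mul_zpow_neg hac, mul_assoc, ← zpow_add, neg_add_eq_sub]
    · rw [mul_assoc, zpow_add]
    · rw [mul_assoc, ← mul_assoc (c ^ _), zpow_mul_eq_mul_zpow_neg hac, ← mul_assoc, ← mul_assoc,
        ha, one_mul, ← zpow_add, neg_add_eq_sub]

@[simp]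
theorem infiniteDihedralHom_r (ha : a * a = 1) (hac : a * c * a⁻¹ = c⁻¹) (i : ZMod 0) :
    infiniteDihedralHom ha hac (.r i) = c ^ ι i := rfl

@[simp]
theorem infiniteDihedralHom_sr (ha : a * a = 1) (hac : a * c * a⁻¹ = c⁻¹) (i : ZMod 0) :
    infiniteDihedralHom ha hac (.sr i) = a * c ^ ι i := rfl

theorem infiniteDihedralHom_bijective (ha : a * a = 1) (hac : a * c * a⁻¹ = c⁻¹)
    (hc : ¬IsOfFinOrder c) (haN : a ∉ zpowers c) (hcover : ∀ g ∉ zpowers c, a * g ∈ zpowers c) :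
    Function.Bijective (infiniteDihedralHom ha hac) := by
  refine ⟨(injective_iff_map_eq_one _).mpr ?_, fun g => ?_⟩
  · rintro (i | i) h
    · rw [infiniteDihedralHom_r, ← zpow_zero c] at h
      have hi : ι i = ι 0 := by simpa using injective_zpow_iff_not_isOfFinOrder.mpr hc h
      rw [ZMod.castHom_injective ℤ hi, DihedralGroup.r_zero]
    · refine absurd ?_ haN
      rw [infiniteDihedralHom_sr, mul_eq_one_iff_eq_inv] at h
      exact h ▸ inv_mem (zpow_mem (mem_zpowers c) _)
  · by_cases hg : g ∈ zpowers c
    · obtain ⟨k, hk⟩ := mem_zpowers_iff.mp hg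
      exact ⟨.r (Int.cast k : ZMod 0), by simpa using hk⟩
    · obtain ⟨k, hk⟩ := mem_zpowers_iff.mp (hcover g hg)
      refine ⟨.sr (Int.cast k : ZMod 0), ?_⟩
      simp [hk, ← mul_assoc, ha]

end InfiniteDihedral

end

theorem metacyclic_of_infinite_order_elements_in_zpowers {G : Type*} [Group G]
    (c : G) (hc : ¬ IsOfFinOrder c)
    (hall : ∀ g : G, ¬ IsOfFinOrder g → g ∈ Subgroup.zpowers c) :
    IsMetacyclic G ∧
      ((Subgroup.zpowers c = ⊤ ∧ Nonempty (G ≃* Multiplicative ℤ)) ∨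
        Nonempty (G ≃* DihedralGroup 0)) := by
  refine ⟨isMetacyclic_of_index_dvd_two _ (index_zpowers_dvd_two hc hall), ?_⟩
  by_cases htop : zpowers c = ⊤
  · have : Infinite G := Infinite.of_injective _ (injective_zpow_iff_not_isOfFinOrder.mpr hc)
    exact .inl ⟨htop, ⟨(intEquivOfZPowersEqTop c htop).symm⟩⟩
  · obtain ⟨a, ha⟩ := SetLike.exists_not_mem_of_ne_top _ htop
    have hbij := infiniteDihedralHom_bijective (mul_self_eq_one_of_notMem_zpowers hc hall ha)
      (conj_eq_inv_of_notMem_zpowers hc hall ha) hc ha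
      fun _ hg => mul_mem_zpowers_of_notMem hc hall ha hg
    exact .inr ⟨(MulEquiv.ofBijective _ hbij).symm⟩
end

section
/- Let G be a group, c ∈ G of infinite order, and suppose every element of infinite order in G lies in ⟨c⟩. If a ∈ G has finite order n ≥ 2 and a c a⁻¹ ∈ ⟨c⟩ with a c a⁻¹ = cⁱ, then i = ±1, and i = 1 is impossible; hence a c a⁻¹ = c⁻¹. -/
/-!
Conjugation by `a` maps `c` to `c ^ i`, so conjugation by `a ^ n = 1` maps `c` to `c ^ (i ^ n)`;
as `c` has infinite order, `i ^ n = 1` and `i = ±1`. If `i = 1`, then `a` commutes with `c`, so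
`a * c` has infinite order and lies in `⟨c⟩`; then so does `a`, and the only element of finite
order in `⟨c⟩` is `1`, contradicting `orderOf a ≥ 2`.
-/

section

variable {G : Type*} [Group G]

theorem eq_one_of_isOfFinOrder_of_mem_zpowers_s3 {c g : G} (hc : ¬IsOfFinOrder c)
    (hg : IsOfFinOrder g) (hgc : g ∈ Subgroup.zpowers c) : g = 1 := by
  obtain ⟨k, rfl⟩ := Subgroup.mem_zpowers_iff.mp hgc
  obtain ⟨m, hm, hcm⟩ := hg.exists_pow_eq_one
  have hkm : c ^ (k * m) = c ^ (0 : ℤ) := by rw [zpow_mul, zpow_natCast, hcm, zpow_zero]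
  have hk : k = 0 := by simpa [hm.ne'] using injective_zpow_iff_not_isOfFinOrder.mpr hc hkm
  rw [hk, zpow_zero]

theorem pow_mul_mul_inv_pow_eq_zpow_pow {a c : G} {i : ℤ} (h : a * c * a⁻¹ = c ^ i) (k : ℕ) :
    a ^ k * c * (a ^ k)⁻¹ = c ^ (i ^ k) := by
  induction k with
  | zero => simp
  | succ k ih =>
    calc a ^ (k + 1) * c * (a ^ (k + 1))⁻¹ = a * (a ^ k * c * (a ^ k)⁻¹) * a⁻¹ := by group
      _ = (a * c * a⁻¹) ^ (i ^ k) := by rw [ih, conj_zpow]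
      _ = c ^ (i ^ (k + 1)) := by rw [h, ← zpow_mul, pow_succ, mul_comm]

theorem eq_one_or_eq_neg_one_of_mul_mul_inv_eq_zpow {a c : G} (hc : ¬IsOfFinOrder c) {n : ℕ}
    (han : a ^ n = 1) (hn : n ≠ 0) {i : ℤ} (h : a * c * a⁻¹ = c ^ i) : i = 1 ∨ i = -1 := by
  have hcin : c ^ (i ^ n) = c ^ (1 : ℤ) := by
    rw [← pow_mul_mul_inv_pow_eq_zpow_pow h n, han]
    simp
  exact Int.isUnit_iff.mp <|
    IsUnit.of_pow_eq_one (injective_zpow_iff_not_isOfFinOrder.mpr hc hcin) hn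

theorem eq_one_of_commute_of_isOfFinOrder {a c : G} (hc : ¬IsOfFinOrder c)
    (hall : ∀ g : G, ¬IsOfFinOrder g → g ∈ Subgroup.zpowers c)
    (ha : IsOfFinOrder a) (hac : Commute a c) : a = 1 := by
  have hmul : ¬IsOfFinOrder (a * c) := fun hfin => hc <| by
    simpa using ((Commute.refl a).inv_left.mul_right hac.inv_left).isOfFinOrder_mul ha.inv hfin
  refine eq_one_of_isOfFinOrder_of_mem_zpowers_s3 hc ha ?_
  simpa using Subgroup.mul_mem _ (hall _ hmul) (Subgroup.inv_mem _ (Subgroup.mem_zpowers c))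

end

theorem conj_eq_inv_of_finite_order {G : Type*} [Group G]
    (c : G) (hc : ¬ IsOfFinOrder c)
    (hall : ∀ g : G, ¬ IsOfFinOrder g → g ∈ Subgroup.zpowers c)
    (a : G) (n : ℕ) (hn : orderOf a = n) (hn2 : 2 ≤ n)
    (i : ℤ) (hi : a * c * a⁻¹ = c ^ i) :
    i = -1 ∧ a * c * a⁻¹ = c⁻¹ := by
  have han : a ^ n = 1 := hn ▸ pow_orderOf_eq_one a
  have ha : IsOfFinOrder a := isOfFinOrder_iff_pow_eq_one.mpr ⟨n, by omega, han⟩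
  obtain rfl | rfl := eq_one_or_eq_neg_one_of_mul_mul_inv_eq_zpow hc han (by omega) hi
  · have hac : Commute a c := mul_inv_eq_iff_eq_mul.mp (by simpa using hi)
    have : orderOf a = 1 := by rw [eq_one_of_commute_of_isOfFinOrder hc hall ha hac, orderOf_one]
    omega
  · exact ⟨rfl, by rw [hi, zpow_neg_one]⟩
end

section
/- Let G be a group with center containing an element t of infinite order generating a normal subgroup ⟨t⟩, and let p : G → G/⟨t⟩ be the quotient map. If φ : G → G is an automorphism with φ(t) = t, and the induced automorphism φ' on G/⟨t⟩ has fixed subgroup that is trivial or infinite cyclic, then Fix(φ) is contained in p⁻¹(Fix(φ')), which is isomorphic to Fix(φ') × ⟨t⟩ and hence is free abelian of rank at most 2. -/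
/-- The fixed subgroup of a group endomorphism. -/
def fixedSubgroup {G : Type*} [Group G] (φ : G →* G) : Subgroup G where
  carrier := {g | φ g = g}
  one_mem' := by simp
  mul_mem' := by intro a b ha hb; simp only [Set.mem_setOf_eq, map_mul] at *; rw [ha, hb]
  inv_mem' := by intro a ha; simp only [Set.mem_setOf_eq, map_inv] at *; rw [ha]

theorem fixed_subgroup_central_extension {G : Type*} [Group G]
    (t : G) (ht : t ∈ Subgroup.center G) (htinf : ¬ IsOfFinOrder t)
    (hN : (Subgroup.zpowers t).Normal)
    (φ : G ≃* G) (hφt : φ t = t)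
    (φ' : (G ⧸ Subgroup.zpowers t) ≃* (G ⧸ Subgroup.zpowers t))
    (hcomm : ∀ g : G, φ' (QuotientGroup.mk g) = QuotientGroup.mk (φ g))
    (hfix : fixedSubgroup φ'.toMonoidHom = ⊥ ∨
      Nonempty (fixedSubgroup φ'.toMonoidHom ≃* Multiplicative ℤ)) :
    fixedSubgroup φ.toMonoidHom ≤
      (fixedSubgroup φ'.toMonoidHom).comap (QuotientGroup.mk' (Subgroup.zpowers t)) ∧
    Nonempty
      (((fixedSubgroup φ'.toMonoidHom).comap (QuotientGroup.mk' (Subgroup.zpowers t))) ≃*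
        (fixedSubgroup φ'.toMonoidHom) × (Subgroup.zpowers t)) := by
  constructor
  · intro g hg
    have hg' : φ g = g := hg
    simp only [Subgroup.mem_comap]
    show φ' (QuotientGroup.mk g) = QuotientGroup.mk g
    rw [hcomm, hg']
  · set N := Subgroup.zpowers t with hNdef
    set F := fixedSubgroup φ'.toMonoidHom with hFdef
    rcases hfix with h0 | e
    · rw [h0, MonoidHom.comap_bot, QuotientGroup.ker_mk']
      exact ⟨MulEquiv.uniqueProd.symm⟩
    · obtain ⟨e⟩ := e
      -- pick a generator x of F and a lift h of it
      set x : F := e.symm (Multiplicative.ofAdd 1) with hxdef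
      obtain ⟨h, hh⟩ := QuotientGroup.mk'_surjective N (x : G ⧸ N)
      have hcen : ∀ s ∈ N, ∀ g : G, s * g = g * s := by
        intro s hs g
        have : s ∈ Subgroup.center G := Subgroup.zpowers_le.mpr ht hs
        exact (Subgroup.mem_center_iff.mp this g).symm
      have hxpow : ∀ m : ℤ, x ^ m = e.symm (Multiplicative.ofAdd m) := by
        intro m
        rw [hxdef, ← map_zpow]
        congr 1
        rw [← ofAdd_zsmul]
        simp
      have key : ∀ m : ℤ, QuotientGroup.mk' N (h ^ m) =
          ((e.symm (Multiplicative.ofAdd m) : F) : G ⧸ N) := by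
        intro m
        rw [map_zpow, hh, ← hxpow m]
        norm_cast
      have hmem : ∀ (a : F) (s : N), h ^ (Multiplicative.toAdd (e a)) * (s : G) ∈
          F.comap (QuotientGroup.mk' N) := by
        intro a s
        have hs : QuotientGroup.mk' N (s : G) = 1 := by
          rw [← MonoidHom.mem_ker, QuotientGroup.ker_mk']; exact s.2
        simp only [Subgroup.mem_comap, map_mul, hs, mul_one, key]
        simp only [ofAdd_toAdd, MulEquiv.symm_apply_apply]
        exact a.2
      let Θ : F × N →* (F.comap (QuotientGroup.mk' N)) :=
      { toFun := fun p => ⟨h ^ (Multiplicative.toAdd (e p.1)) * (p.2 : G), hmem p.1 p.2⟩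
        map_one' := by
          ext
          simp
        map_mul' := by
          rintro ⟨a₁, s₁⟩ ⟨a₂, s₂⟩
          ext
          simp only [Subgroup.coe_mul, Prod.fst_mul, Prod.snd_mul, map_mul, toAdd_mul]
          rw [zpow_add]
          have := hcen _ s₁.2 (h ^ (Multiplicative.toAdd (e a₂)))
          push_cast
          rw [mul_assoc, mul_assoc, ← mul_assoc (s₁:G), this, mul_assoc] }
      have hθval : ∀ p : F × N, ((Θ p : G)) = h ^ (Multiplicative.toAdd (e p.1)) * (p.2 : G) :=
        fun p => rfl
      have hinj : Function.Injective Θ := by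
        rw [injective_iff_map_eq_one]
        rintro ⟨a, s⟩ hp
        have hp' : h ^ (Multiplicative.toAdd (e a)) * (s : G) = 1 := by
          have := congrArg (Subtype.val) hp
          exact this
        have hs : QuotientGroup.mk' N (s : G) = 1 := by
          rw [← MonoidHom.mem_ker, QuotientGroup.ker_mk']; exact s.2
        have h2 : ((e.symm (Multiplicative.ofAdd (Multiplicative.toAdd (e a))) : F) : G ⧸ N) = 1 := by
          rw [← key]
          calc (QuotientGroup.mk' N) (h ^ Multiplicative.toAdd (e a))
              = QuotientGroup.mk' N (h ^ Multiplicative.toAdd (e a)) * QuotientGroup.mk' N (s:G) := by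
                rw [hs, mul_one]
            _ = QuotientGroup.mk' N (h ^ Multiplicative.toAdd (e a) * (s:G)) := (map_mul _ _ _).symm
            _ = 1 := by rw [hp', map_one]
        have ha : a = 1 := by
          have : (e.symm (Multiplicative.ofAdd (Multiplicative.toAdd (e a))) : F) = 1 := by
            exact_mod_cast h2
          simpa using this
        have hm : Multiplicative.toAdd (e a) = 0 := by rw [ha]; simp
        have hs1 : (s : G) = 1 := by
          rw [hm] at hp'; simpa using hp'
        ext <;> simp [ha, hs1]
      have hsurj : Function.Surjective Θ := by
        rintro ⟨g, hg⟩
        have hg' : QuotientGroup.mk' N g ∈ F := hg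
        set a : F := ⟨QuotientGroup.mk' N g, hg'⟩ with hadef
        set m : ℤ := Multiplicative.toAdd (e a) with hmdef
        have hmk : QuotientGroup.mk' N (h ^ m) = (a : G ⧸ N) := by
          rw [key m, hmdef]
          simp
        have hsN : (h ^ m)⁻¹ * g ∈ N := by
          rw [← QuotientGroup.ker_mk' N, MonoidHom.mem_ker, map_mul, map_inv, hmk]
          simp [hadef]
        refine ⟨⟨a, ⟨(h ^ m)⁻¹ * g, hsN⟩⟩, ?_⟩
        ext
        rw [hθval]
        simp [hmdef, mul_assoc]
      exact ⟨(MulEquiv.ofBijective Θ ⟨hinj, hsurj⟩).symm⟩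
end
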